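/- arXiv:2009.01951 — 2 statements merged into one kernel-verified Lean document; each statement's English description precedes it below -/
import Mathlib

section
/- Let f be a bounded holomorphic function on the right half-plane H₊ = {z ∈ ℂ : Re z > 0}. If the set E = {k ∈ ℕ, k ≥ 1 : f(k) = 0} satisfies ∑_{k ∈ E} 1/k = ∞, then f vanishes identically on H₊. -/
/-!
Suppose `f z ≠ 0`. For a finite set `S` of zeros `a ≥ 1` of `f`, the half-plane Blaschke factors
`B_a(w) = (w - a) / (w + a)` can be divided out of `f` one at a time without increasing the
bound `C` on `|f|`: the quotient is bounded by `C (a + δ) / (a - δ)` on `Re w = δ` and bounded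
near infinity, so Phragmén–Lindelöf applies on `Re w > δ`, and `δ → 0`. Since
`|B_a(z)|² = 1 - 4 a Re z / |z + a|² ≤ exp (-c / a)` with `c = 4 Re z / |z + 1|²`, this gives
`|f z| ≤ C exp (-(c / 2) ∑_{a ∈ S} 1 / a)`. Hence the sums `∑_{a ∈ S} 1 / a` are bounded,
contradicting the divergence.
-/

open Complex ENNReal Filter Set Topology

local notation "H₊" => Set.ofPred fun z : ℂ => 0 < re z

noncomputable def blaschkeFactor (a : ℝ) (z : ℂ) : ℂ := (z - a) / (z + a)

lemma add_ofReal_ne_zero {a : ℝ} {z : ℂ} (hre : 0 < z.re + a) : z + a ≠ 0 := by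
  intro h
  have := congrArg re h
  simp only [add_re, ofReal_re, zero_re] at this
  linarith

lemma norm_sub_ofReal_sq (z : ℂ) (a : ℝ) : ‖z - a‖ ^ 2 = ‖z + a‖ ^ 2 - 4 * a * z.re := by
  simp only [Complex.sq_norm, normSq_apply, sub_re, add_re, sub_im, add_im, ofReal_re, ofReal_im]
  ring

lemma norm_blaschkeFactor_sq {a : ℝ} {z : ℂ} (hz : z + a ≠ 0) :
    ‖blaschkeFactor a z‖ ^ 2 = 1 - 4 * a * z.re / ‖z + a‖ ^ 2 := by
  have : 0 < ‖z + a‖ ^ 2 := by positivity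
  rw [blaschkeFactor, norm_div, div_pow, norm_sub_ofReal_sq]
  field_simp

lemma blaschkeFactor_ne_zero {a : ℝ} {z : ℂ} (hza : z ≠ a) (hz : z + a ≠ 0) :
    blaschkeFactor a z ≠ 0 :=
  div_ne_zero (sub_ne_zero.2 hza) hz

lemma one_third_le_norm_blaschkeFactor {a : ℝ} (ha : 0 < a) {z : ℂ} (hz : 2 * a ≤ ‖z‖) :
    1 / 3 ≤ ‖blaschkeFactor a z‖ := by
  have hsub : ‖z‖ - a ≤ ‖z - a‖ := by
    simpa [abs_of_pos ha] using norm_sub_norm_le z (a : ℂ)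
  have hadd : ‖z + a‖ ≤ ‖z‖ + a := by
    simpa [abs_of_pos ha] using norm_add_le z (a : ℂ)
  have hpos : 0 < ‖z + a‖ := by
    have : ‖z‖ ≤ ‖z + a‖ + a := by
      simpa [abs_of_pos ha] using norm_sub_le (z + a) (a : ℂ)
    nlinarith [norm_nonneg z]
  rw [blaschkeFactor, norm_div, le_div_iff₀ hpos]
  linarith

lemma div_le_norm_blaschkeFactor {a : ℝ} (ha : 0 < a) {z : ℂ} (hz₀ : 0 ≤ z.re) (hza : z.re ≤ a) :
    (a - z.re) / (a + z.re) ≤ ‖blaschkeFactor a z‖ := by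
  have hne : z + a ≠ 0 := add_ofReal_ne_zero (by linarith)
  have hre : (a + z.re) ^ 2 ≤ ‖z + a‖ ^ 2 := by
    rw [Complex.sq_norm, normSq_apply]
    simp only [add_re, ofReal_re, add_im, ofReal_im, add_zero]
    nlinarith [mul_self_nonneg z.im]
  have hsq : ((a - z.re) / (a + z.re)) ^ 2 ≤ ‖blaschkeFactor a z‖ ^ 2 := by
    rw [norm_blaschkeFactor_sq hne]
    have h4 : 4 * a * z.re / ‖z + a‖ ^ 2 ≤ 4 * a * z.re / (a + z.re) ^ 2 :=
      div_le_div_of_nonneg_left (by positivity) (by positivity) hre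
    have hid : ((a - z.re) / (a + z.re)) ^ 2 = 1 - 4 * a * z.re / (a + z.re) ^ 2 := by
      field_simp
      ring
    linarith
  exact pow_le_pow_iff_left₀ (div_nonneg (by linarith) (by linarith)) (norm_nonneg _)
    two_ne_zero |>.1 hsq

lemma norm_blaschkeFactor_le_exp {a : ℝ} (ha : 1 ≤ a) {z : ℂ} (hz : 0 < z.re) :
    ‖blaschkeFactor a z‖ ≤ Real.exp (-(2 * z.re / ‖z + 1‖ ^ 2) / a) := by
  have hne : z + a ≠ 0 := add_ofReal_ne_zero (by linarith)
  have hne1 : z + 1 ≠ 0 := by exact_mod_cast add_ofReal_ne_zero (a := 1) (by linarith)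
  have hz1 : 0 < ‖z + 1‖ ^ 2 := by positivity
  have hgrowth : ‖z + a‖ ^ 2 ≤ a ^ 2 * ‖z + 1‖ ^ 2 := by
    simp only [Complex.sq_norm, normSq_apply, add_re, add_im, ofReal_re, ofReal_im, one_re, one_im]
    have hre : z.re + a ≤ a * (z.re + 1) := by nlinarith
    have ha2 : 1 ≤ a * a := by nlinarith
    nlinarith [mul_self_le_mul_self (by linarith) hre,
      mul_le_mul_of_nonneg_right ha2 (mul_self_nonneg z.im)]
  have hsq : ‖blaschkeFactor a z‖ ^ 2 ≤ Real.exp (-(2 * z.re / ‖z + 1‖ ^ 2) / a) ^ 2 := by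
    rw [norm_blaschkeFactor_sq hne, ← Real.exp_nat_mul]
    have : 4 * z.re / ‖z + 1‖ ^ 2 / a ≤ 4 * a * z.re / ‖z + a‖ ^ 2 := by
      rw [div_div, div_le_div_iff₀ (by positivity) (by positivity)]
      nlinarith
    have hexp := Real.add_one_le_exp (-(4 * z.re / ‖z + 1‖ ^ 2) / a)
    have : (2 : ℕ) * (-(2 * z.re / ‖z + 1‖ ^ 2) / a) = -(4 * z.re / ‖z + 1‖ ^ 2) / a := by
      push_cast; ring
    rw [this]
    linarith [neg_div a (4 * z.re / ‖z + 1‖ ^ 2)]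
  exact pow_le_pow_iff_left₀ (norm_nonneg _) (Real.exp_nonneg _) two_ne_zero |>.1 hsq

lemma norm_le_div_of_eq_mul {𝕜 : Type*} [NormedDivisionRing 𝕜] {x y w : 𝕜} {C b : ℝ}
    (hxyw : x = y * w) (hx : ‖x‖ ≤ C) (hb : 0 < b) (hy : b ≤ ‖y‖) : ‖w‖ ≤ C / b := by
  rw [le_div_iff₀ hb]
  calc ‖w‖ * b ≤ ‖w‖ * ‖y‖ := mul_le_mul_of_nonneg_left hy (norm_nonneg w)
    _ = ‖x‖ := by rw [hxyw, norm_mul, mul_comm]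
    _ ≤ C := hx

lemma norm_le_of_norm_le_on_re_eq {E : Type*} [NormedAddCommGroup E] [NormedSpace ℂ E]
    {h : ℂ → E} {δ C R B : ℝ} (hh : DifferentiableOn ℂ h H₊) (hδ : 0 < δ)
    (hfar : ∀ z ∈ H₊, R ≤ ‖z‖ → ‖h z‖ ≤ B) (hline : ∀ y : ℝ, ‖h (δ + y * I)‖ ≤ C)
    {z : ℂ} (hz : δ ≤ z.re) : ‖h z‖ ≤ C := by
  have hshift : ∀ w : ℂ, 0 ≤ w.re → w + δ ∈ H₊ := fun w hw => by
    simp only [mem_ofPred_eq, add_re, ofReal_re]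
    linarith
  have hfar' : ∀ᶠ w in Bornology.cobounded ℂ, R + δ ≤ ‖w‖ :=
    tendsto_norm_cobounded_atTop.eventually_ge_atTop _
  have key := PhragmenLindelof.right_half_plane_of_bounded_on_real (C := C)
    (f := fun w => h (w + δ)) (z := z - δ) ?_ ?_ ?_ ?_ (by simpa using hz)
  · simpa using key
  · refine DifferentiableOn.diffContOnCl ?_
    rw [closure_setOfPred_lt_re]
    exact hh.comp (differentiableOn_id.add_const _) fun w hw => hshift w hw
  · refine ⟨0, two_pos, 0, Asymptotics.IsBigO.of_bound B ?_⟩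
    rw [eventually_inf_principal]
    filter_upwards [hfar'] with w hwR hw
    have : R ≤ ‖w + δ‖ := by
      have := norm_sub_norm_le w (-δ : ℂ)
      simp only [sub_neg_eq_add, norm_neg, norm_real, Real.norm_eq_abs, abs_of_pos hδ] at this
      linarith
    simpa using hfar _ (hshift w hw.le) this
  · refine isBoundedUnder_of_eventually_le (a := B) ?_
    filter_upwards [eventually_ge_atTop (max R 0)] with x hx
    rw [max_le_iff] at hx
    refine hfar _ (hshift x (by simpa using hx.2)) ?_
    calc R ≤ ((x : ℂ) + δ).re := by simp; linarith
      _ ≤ ‖(x : ℂ) + δ‖ := re_le_norm _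
  · intro y
    simpa [add_comm] using hline y

lemma norm_le_of_eq_blaschkeFactor_mul {g h : ℂ → ℂ} {a C : ℝ} (ha : 0 < a)
    (hh : DifferentiableOn ℂ h H₊) (hg : ∀ z ∈ H₊, ‖g z‖ ≤ C)
    (hgh : ∀ z ∈ H₊, g z = blaschkeFactor a z * h z) : ∀ z ∈ H₊, ‖h z‖ ≤ C := by
  have hfar : ∀ z ∈ H₊, 2 * a ≤ ‖z‖ → ‖h z‖ ≤ C / (1 / 3) := fun z hz hzR =>
    norm_le_div_of_eq_mul (hgh z hz) (hg z hz) (by norm_num)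
      (one_third_le_norm_blaschkeFactor ha hzR)
  have hshifted : ∀ δ ∈ Ioo 0 a, ∀ z : ℂ, δ ≤ z.re → ‖h z‖ ≤ C / ((a - δ) / (a + δ)) := by
    rintro δ ⟨hδ, hδa⟩ z hz
    refine norm_le_of_norm_le_on_re_eq hh hδ hfar (fun y => ?_) hz
    have hmem : (δ : ℂ) + y * I ∈ H₊ := by simpa using hδ
    refine norm_le_div_of_eq_mul (hgh _ hmem) (hg _ hmem) (div_pos (by linarith) (by linarith)) ?_
    simpa using div_le_norm_blaschkeFactor ha (z := δ + y * I) (by simpa using hδ.le)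
      (by simpa using hδa.le)
  intro z hz
  have hlim : Tendsto (fun δ : ℝ => C / ((a - δ) / (a + δ))) (𝓝[>] 0) (𝓝 C) := by
    have hcont : ContinuousAt (fun δ : ℝ => C / ((a - δ) / (a + δ))) 0 := by
      refine continuousAt_const.div ((continuousAt_const.sub continuousAt_id).div
        (continuousAt_const.add continuousAt_id) ?_) ?_ <;> simp [ha.ne']
    simpa [ha.ne'] using hcont.tendsto.mono_left nhdsWithin_le_nhds
  refine ge_of_tendsto hlim ?_
  filter_upwards [Ioo_mem_nhdsGT (lt_min ha hz)] with δ ⟨hδ, hδmin⟩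
  exact hshifted δ ⟨hδ, hδmin.trans_le (min_le_left _ _)⟩ z (hδmin.trans_le (min_le_right _ _)).le

lemma exists_eq_blaschkeFactor_mul {g : ℂ → ℂ} {a : ℝ} (ha : 0 < a)
    (hg : DifferentiableOn ℂ g H₊) (hga : g a = 0) :
    ∃ h : ℂ → ℂ, DifferentiableOn ℂ h H₊ ∧ ∀ z ∈ H₊, g z = blaschkeFactor a z * h z := by
  have ha' : (a : ℂ) ∈ H₊ := by simpa using ha
  refine ⟨fun z => (z + a) * dslope g a z, (differentiableOn_id.add_const _).mul
    ((differentiableOn_dslope ((isOpen_re_gt 0).mem_nhds ha')).2 hg), fun z hz => ?_⟩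
  have hza : z + a ≠ 0 := add_ofReal_ne_zero (by simp at hz; linarith)
  have := sub_smul_dslope g a z
  rw [hga, sub_zero, smul_eq_mul] at this
  rw [blaschkeFactor, ← this]
  field_simp

lemma exists_eq_prod_blaschkeFactor_mul {f : ℂ → ℂ} {C : ℝ} (hf : DifferentiableOn ℂ f H₊)
    (hC : ∀ z ∈ H₊, ‖f z‖ ≤ C) (S : Finset ℝ) (hS : ∀ a ∈ S, 0 < a ∧ f a = 0) :
    ∃ G : ℂ → ℂ, DifferentiableOn ℂ G H₊ ∧ (∀ z ∈ H₊, ‖G z‖ ≤ C) ∧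
      ∀ z ∈ H₊, f z = (∏ a ∈ S, blaschkeFactor a z) * G z := by
  classical
  induction S using Finset.induction_on with
  | empty => exact ⟨f, hf, hC, fun z _ => by simp⟩
  | @insert a S haS ih =>
    obtain ⟨ha, hfa⟩ := hS a (Finset.mem_insert_self a S)
    obtain ⟨G, hG, hGC, hfG⟩ := ih fun b hb => hS b (Finset.mem_insert_of_mem hb)
    have ha' : (a : ℂ) ∈ H₊ := by simpa using ha
    have hGa : G a = 0 := by
      have hprod : ∏ b ∈ S, blaschkeFactor b a ≠ 0 := Finset.prod_ne_zero_iff.2 fun b hb =>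
        blaschkeFactor_ne_zero (by exact_mod_cast ne_of_mem_of_not_mem hb haS |>.symm)
          (add_ofReal_ne_zero (by simpa using add_pos ha (hS b (Finset.mem_insert_of_mem hb)).1))
      simpa [hprod, hfa] using (hfG a ha').symm
    obtain ⟨H, hH, hGH⟩ := exists_eq_blaschkeFactor_mul ha hG hGa
    refine ⟨H, hH, norm_le_of_eq_blaschkeFactor_mul ha hH hGC hGH, fun z hz => ?_⟩
    rw [hfG z hz, hGH z hz, Finset.prod_insert haS]
    ring

lemma norm_le_mul_exp_neg_sum_one_div {f : ℂ → ℂ} {C : ℝ} (hf : DifferentiableOn ℂ f H₊)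
    (hC : ∀ z ∈ H₊, ‖f z‖ ≤ C) {S : Finset ℝ} (hS : ∀ a ∈ S, 1 ≤ a ∧ f a = 0) {z : ℂ}
    (hz : 0 < z.re) :
    ‖f z‖ ≤ C * Real.exp (-(2 * z.re / ‖z + 1‖ ^ 2) * ∑ a ∈ S, 1 / a) := by
  obtain ⟨G, -, hGC, hfG⟩ := exists_eq_prod_blaschkeFactor_mul hf hC S
    fun a ha => ⟨by linarith [(hS a ha).1], (hS a ha).2⟩
  calc ‖f z‖ = (∏ a ∈ S, ‖blaschkeFactor a z‖) * ‖G z‖ := by rw [hfG z hz, norm_mul, norm_prod]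
    _ ≤ (∏ a ∈ S, Real.exp (-(2 * z.re / ‖z + 1‖ ^ 2) / a)) * C :=
      mul_le_mul (Finset.prod_le_prod (fun _ _ => norm_nonneg _)
          fun a ha => norm_blaschkeFactor_le_exp (hS a ha).1 hz)
        (hGC z hz) (norm_nonneg _) (Finset.prod_nonneg fun _ _ => (Real.exp_pos _).le)
    _ = C * Real.exp (-(2 * z.re / ‖z + 1‖ ^ 2) * ∑ a ∈ S, 1 / a) := by
      rw [← Real.exp_sum, mul_comm, Finset.mul_sum]
      simp only [mul_one_div]

lemma le_log_div_div_of_le_mul_exp_neg {ε c C s : ℝ} (hε : 0 < ε) (hc : 0 < c)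
    (h : ε ≤ C * Real.exp (-c * s)) : s ≤ Real.log (C / ε) / c := by
  have hC : 0 < C := pos_of_mul_pos_left (hε.trans_le h) (Real.exp_pos _).le
  rw [le_div_iff₀ hc, mul_comm, Real.le_log_iff_exp_le (div_pos hC hε), le_div_iff₀ hε]
  calc Real.exp (c * s) * ε ≤ Real.exp (c * s) * (C * Real.exp (-c * s)) :=
        mul_le_mul_of_nonneg_left h (Real.exp_pos _).le
    _ = C := by rw [mul_left_comm, ← Real.exp_add, neg_mul, add_neg_cancel, Real.exp_zero, mul_one]

lemma tsum_one_div_ne_top_of_sum_le {E : Set ℕ} (hE : ∀ k ∈ E, 0 < k) {B : ℝ}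
    (h : ∀ s : Finset E, ∑ k ∈ s, (1 : ℝ) / (k : ℕ) ≤ B) :
    ∑' k : E, (1 : ℝ≥0∞) / ((k : ℕ) : ℝ≥0∞) ≠ ⊤ := by
  have hofReal : ∀ k : E, (1 : ℝ≥0∞) / ((k : ℕ) : ℝ≥0∞) = ENNReal.ofReal (1 / (k : ℕ)) :=
    fun k => by
      rw [ENNReal.ofReal_div_of_pos (by exact_mod_cast hE k k.2), ENNReal.ofReal_one,
        ENNReal.ofReal_natCast]
  rw [tsum_congr hofReal, ← ENNReal.ofReal_tsum_of_nonneg (fun _ => by positivity)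
    (summable_of_sum_le (fun _ => by positivity) h)]
  exact ENNReal.ofReal_ne_top

/-- If a bounded holomorphic function on the right half-plane vanishes on a set of
positive integers whose reciprocals have divergent sum, then it vanishes identically. -/
theorem stmt_0 (f : ℂ → ℂ)
    (hdiff : DifferentiableOn ℂ f {z : ℂ | 0 < z.re})
    (hbdd : ∃ C : ℝ, ∀ z ∈ {z : ℂ | 0 < z.re}, ‖f z‖ ≤ C)
    (hdiv : ∑' k : {k : ℕ | 0 < k ∧ f (k : ℂ) = 0}, (1 : ℝ≥0∞) / ((k : ℕ) : ℝ≥0∞) = ⊤) :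
    ∀ z : ℂ, 0 < z.re → f z = 0 := by
  obtain ⟨C, hC⟩ := hbdd
  intro z hz
  by_contra hfz
  have hc : 0 < 2 * z.re / ‖z + 1‖ ^ 2 := by
    have : z + (1 : ℝ) ≠ 0 := add_ofReal_ne_zero (by linarith)
    push_cast at this
    positivity
  refine tsum_one_div_ne_top_of_sum_le (fun k hk => hk.1)
    (B := Real.log (C / ‖f z‖) / (2 * z.re / ‖z + 1‖ ^ 2)) (fun s => ?_) hdiv
  let e : {k : ℕ | 0 < k ∧ f (k : ℂ) = 0} ↪ ℝ :=
    ⟨fun k => ((k : ℕ) : ℝ), Nat.cast_injective.comp Subtype.val_injective⟩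
  have hS : ∀ a ∈ s.map e, 1 ≤ a ∧ f a = 0 := by
    simp only [Finset.mem_map]
    rintro _ ⟨⟨k, hk0, hfk⟩, -, rfl⟩
    exact ⟨by simpa [e] using Nat.succ_le_of_lt hk0, by simpa [e] using hfk⟩
  have := norm_le_mul_exp_neg_sum_one_div hdiff hC hS hz
  rw [Finset.sum_map] at this
  exact le_log_div_div_of_le_mul_exp_neg (norm_pos_iff.2 hfz) hc this
end

section
/- Define a subset E ⊆ ℕ₀ⁿ to satisfy condition (I) if it contains a subset Ê ⊆ (ℕ₊)ⁿ such that ∑_{k ∈ π₁(Ê)} 1/k = ∞ and for every 1 ≤ j < n and every j-tuple (a₁,…,a_j) of positive integers whose fiber Ê(a₁,…,a_j) = {a ∈ Ê : π_k(a) = a_k for k ≤ j} is nonempty, this fiber is thick, i.e. ∑_{k ∈ π_{j+1}(Ê(a₁,…,a_j)) ∩ ℕ₊} 1/k = ∞. Prove: if Z₁, Z₂ ⊆ ℕ₀ⁿ and Z₁ ∪ Z₂ satisfies condition (I), then Z₁ satisfies condition (I) or Z₂ satisfies condition (I). -/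
open scoped ENNReal

/-- The fiber of `E` consisting of multi-indices whose coordinates below `j`
agree with those of `a`. -/
def fiberSet {n : ℕ} (E : Set (Fin n → ℕ)) (j : Fin n) (a : Fin n → ℕ) :
    Set (Fin n → ℕ) :=
  {x ∈ E | ∀ i : Fin n, i < j → x i = a i}

/-- A set `F` of multi-indices is *thick* in the coordinate `j` if the positive
integers occurring as `j`-th coordinates of elements of `F` have divergent
sum of reciprocals. -/
def ThickAt {n : ℕ} (F : Set (Fin n → ℕ)) (j : Fin n) : Prop :=
  ∑' k : {k : ℕ | 0 < k ∧ ∃ x ∈ F, x j = k}, (1 : ℝ≥0∞) / ((k : ℕ) : ℝ≥0∞) = ⊤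

/-- Condition (I): `E` contains a subset `Ê` of positive multi-indices such that the
first coordinates of `Ê` have divergent sum of reciprocals and, for every `j ≥ 1`,
every nonempty fiber of `Ê` obtained by fixing the first `j` coordinates is thick
in the `(j+1)`-st coordinate. -/
def CondI {n : ℕ} [NeZero n] (E : Set (Fin n → ℕ)) : Prop :=
  ∃ Ehat : Set (Fin n → ℕ), Ehat ⊆ E ∧ (∀ x ∈ Ehat, ∀ i, 0 < x i) ∧
    ThickAt Ehat 0 ∧
    ∀ j : Fin n, 0 < j → ∀ a : Fin n → ℕ,
      (fiberSet Ehat j a).Nonempty → ThickAt (fiberSet Ehat j a) j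


/-!
Colour the nodes of a thick tree bottom-up: a leaf is `Z`-rich if it lies in `Z`, and an inner
node at level `j` is `Z`-rich if the `j`-th coordinates of its `Z`-rich children form a thick set.
Sets of positive integers with divergent sum of reciprocals are partition regular, so in a thick
tree every node is `Z`-rich or `Zᶜ`-rich. If the root is `Z`-rich, the leaves all of whose
ancestors are `Z`-rich form a thick tree inside `Z`. Applied to `Z = Z₁` and the tree `Ê` for
`Z₁ ∪ Z₂`, this yields a thick tree inside `Z₁` or inside `Ê \ Z₁ ⊆ Z₂`.
-/

variable {n : ℕ}

section ThickAt

variable {A B : Set (Fin n → ℕ)} {j : Fin n}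

theorem ThickAt.mono_values (hA : ThickAt A j) (h : ∀ x ∈ A, ∃ y ∈ B, y j = x j) :
    ThickAt B j := by
  rw [ThickAt, ← top_le_iff] at hA ⊢
  refine hA.trans (ENNReal.tsum_mono_subtype (fun k : ℕ => 1 / (k : ℝ≥0∞)) ?_)
  rintro k ⟨hk, x, hx, rfl⟩
  obtain ⟨y, hy, hyx⟩ := h x hx
  exact ⟨hk, y, hy, hyx⟩

theorem ThickAt.mono (hA : ThickAt A j) (h : A ⊆ B) : ThickAt B j :=
  hA.mono_values fun x hx => ⟨x, h hx, rfl⟩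

theorem ThickAt.nonempty (hA : ThickAt A j) : A.Nonempty := by
  rw [Set.nonempty_iff_ne_empty]
  rintro rfl
  simp [ThickAt] at hA

theorem thickAt_union : ThickAt (A ∪ B) j ↔ ThickAt A j ∨ ThickAt B j := by
  refine ⟨fun h => ?_, fun h => h.elim (·.mono Set.subset_union_left)
    (·.mono Set.subset_union_right)⟩
  have hvalues : {k : ℕ | 0 < k ∧ ∃ x ∈ A ∪ B, x j = k} =
      {k | 0 < k ∧ ∃ x ∈ A, x j = k} ∪ {k | 0 < k ∧ ∃ x ∈ B, x j = k} := by
    ext k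
    simp only [Set.mem_union, Set.mem_ofPred_eq, or_and_right, exists_or, and_or_left]
  rw [ThickAt, hvalues, ← top_le_iff] at h
  rw [ThickAt, ThickAt, ← ENNReal.add_eq_top, ← top_le_iff]
  exact h.trans (ENNReal.tsum_union_le (fun k : ℕ => 1 / (k : ℝ≥0∞)) _ _)

end ThickAt

def AgreeBelow (j : ℕ) (x y : Fin n → ℕ) : Prop :=
  ∀ i : Fin n, (i : ℕ) < j → x i = y i

namespace AgreeBelow

variable {i j : ℕ} {x y z : Fin n → ℕ}

theorem refl (j : ℕ) (x : Fin n → ℕ) : AgreeBelow j x x := fun _ _ => rfl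

theorem zero (x y : Fin n → ℕ) : AgreeBelow 0 x y := fun _ hi => absurd hi (Nat.not_lt_zero _)

theorem symm (h : AgreeBelow j x y) : AgreeBelow j y x := fun i hi => (h i hi).symm

theorem trans (hxy : AgreeBelow j x y) (hyz : AgreeBelow j y z) : AgreeBelow j x z :=
  fun i hi => (hxy i hi).trans (hyz i hi)

theorem mono (h : AgreeBelow j x y) (hij : i ≤ j) : AgreeBelow i x y :=
  fun k hk => h k (hk.trans_le hij)

theorem eq_of_le (h : AgreeBelow j x y) (hj : n ≤ j) : x = y :=
  funext fun i => h i (i.isLt.trans_le hj)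

end AgreeBelow

def cylinder (E : Set (Fin n → ℕ)) (j : ℕ) (x : Fin n → ℕ) : Set (Fin n → ℕ) :=
  {y ∈ E | AgreeBelow j y x}

theorem cylinder_zero (E : Set (Fin n → ℕ)) (x : Fin n → ℕ) : cylinder E 0 x = E :=
  Set.sep_eq_self_iff_mem_true.mpr fun y _ => AgreeBelow.zero y x

theorem cylinder_congr (E : Set (Fin n → ℕ)) {j : ℕ} {x x' : Fin n → ℕ}
    (h : AgreeBelow j x x') : cylinder E j x = cylinder E j x' :=
  Set.sep_ext_iff.mpr fun _ _ => ⟨fun hy => hy.trans h, fun hy => hy.trans h.symm⟩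

def IsThickTree (E : Set (Fin n → ℕ)) : Prop :=
  ∀ (j : Fin n) (x : Fin n → ℕ), (cylinder E j x).Nonempty → ThickAt (cylinder E j x) j

theorem condI_iff [NeZero n] {E : Set (Fin n → ℕ)} :
    CondI E ↔ ∃ F ⊆ E, (∀ x ∈ F, ∀ i, 0 < x i) ∧ F.Nonempty ∧ IsThickTree F := by
  have hzero : ((0 : Fin n) : ℕ) = 0 := Fin.val_zero n
  constructor
  · rintro ⟨F, hFE, hpos, hroot, hfib⟩
    refine ⟨F, hFE, hpos, hroot.nonempty, fun j x hne => ?_⟩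
    rcases eq_or_ne j 0 with rfl | hj
    · rwa [hzero, cylinder_zero]
    · exact hfib j ((Fin.pos_iff_ne_zero' j).mpr hj) x hne
  · rintro ⟨F, hFE, hpos, ⟨x, hx⟩, htree⟩
    have hroot := htree 0 x
    simp only [hzero, cylinder_zero] at hroot
    exact ⟨F, hFE, hpos, hroot ⟨x, hx⟩, fun j _ a hne => htree j a hne⟩

section Rich

variable {E Z : Set (Fin n → ℕ)} {j : ℕ} {x : Fin n → ℕ}

/-- `x` stands for the node at level `j` given by its coordinates below `j`. -/
def IsRich (E Z : Set (Fin n → ℕ)) (j : ℕ) (x : Fin n → ℕ) : Prop :=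
  if hj : j < n then ThickAt {y ∈ cylinder E j x | IsRich E Z (j + 1) y} ⟨j, hj⟩ else x ∈ Z
termination_by n - j

theorem isRich_of_lt (hj : j < n) :
    IsRich E Z j x ↔ ThickAt {y ∈ cylinder E j x | IsRich E Z (j + 1) y} ⟨j, hj⟩ := by
  rw [IsRich, dif_pos hj]

theorem isRich_of_le (hj : n ≤ j) : IsRich E Z j x ↔ x ∈ Z := by
  rw [IsRich, dif_neg hj.not_gt]

theorem isRich_congr {x' : Fin n → ℕ} (h : AgreeBelow j x x') :
    IsRich E Z j x ↔ IsRich E Z j x' := by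
  rcases lt_or_ge j n with hj | hj
  · rw [isRich_of_lt hj, isRich_of_lt hj, cylinder_congr E h]
  · rw [h.eq_of_le hj]

theorem IsRich.exists_child (h : IsRich E Z j x) (hj : j < n) :
    ∃ y ∈ cylinder E j x, IsRich E Z (j + 1) y :=
  ((isRich_of_lt hj).mp h).nonempty

def richLeaves (E Z : Set (Fin n → ℕ)) : Set (Fin n → ℕ) :=
  {y ∈ E | ∀ i, IsRich E Z i y}

theorem richLeaves_subset : richLeaves E Z ⊆ E ∩ Z :=
  fun _ hy => ⟨hy.1, (isRich_of_le le_rfl).mp (hy.2 n)⟩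

theorem forall_isRich_le_succ {y z : Fin n → ℕ} (hz : ∀ i ≤ j, IsRich E Z i z)
    (hyz : AgreeBelow j y z) (hy : IsRich E Z (j + 1) y) : ∀ i ≤ j + 1, IsRich E Z i y := by
  intro i hi
  rcases hi.lt_or_eq with hi | rfl
  · exact (isRich_congr (hyz.mono (Nat.le_of_lt_succ hi))).mpr (hz i (Nat.le_of_lt_succ hi))
  · exact hy

theorem exists_mem_richLeaves (j : ℕ) {y : Fin n → ℕ} (hy : y ∈ E)
    (h : ∀ i ≤ j, IsRich E Z i y) : ∃ y' ∈ richLeaves E Z, AgreeBelow j y' y := by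
  by_cases hj : j < n
  · obtain ⟨y₁, ⟨hy₁, hy₁y⟩, hrich⟩ := (h j le_rfl).exists_child hj
    obtain ⟨y', hy', hy'y₁⟩ :=
      exists_mem_richLeaves (j + 1) hy₁ (forall_isRich_le_succ h hy₁y hrich)
    exact ⟨y', hy', (hy'y₁.mono j.le_succ).trans hy₁y⟩
  · refine ⟨y, ⟨hy, fun i => ?_⟩, AgreeBelow.refl j y⟩
    rcases le_or_gt i j with hi | hi
    · exact h i hi
    · exact (isRich_of_le (by omega)).mpr ((isRich_of_le (not_lt.mp hj)).mp (h j le_rfl))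
termination_by n - j

theorem IsRich.richLeaves_nonempty [NeZero n] (h : IsRich E Z 0 x) :
    (richLeaves E Z).Nonempty := by
  obtain ⟨y, ⟨hy, hyx⟩, hrich⟩ := h.exists_child (Nat.pos_of_neZero n)
  obtain ⟨y', hy', -⟩ := exists_mem_richLeaves 1 hy
    (forall_isRich_le_succ (fun i hi => Nat.le_zero.mp hi ▸ h) hyx hrich)
  exact ⟨y', hy'⟩

theorem isThickTree_richLeaves : IsThickTree (richLeaves E Z) := by
  rintro j x ⟨z, hz, hzx⟩
  refine ((isRich_of_lt j.isLt).mp (hz.2 j)).mono_values fun y ⟨⟨hyE, hyz⟩, hrich⟩ => ?_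
  obtain ⟨y', hy', hy'y⟩ :=
    exists_mem_richLeaves (j + 1) hyE (forall_isRich_le_succ (fun i _ => hz.2 i) hyz hrich)
  exact ⟨y', ⟨hy', ((hy'y.mono (j : ℕ).le_succ).trans hyz).trans hzx⟩,
    hy'y j (Nat.lt_succ_self j)⟩

theorem IsThickTree.isRich_or_isRich_compl (hE : IsThickTree E) (Z : Set (Fin n → ℕ))
    (j : ℕ) (x : Fin n → ℕ) (hne : (cylinder E j x).Nonempty) :
    IsRich E Z j x ∨ IsRich E Zᶜ j x := by
  by_cases hj : j < n
  · rw [isRich_of_lt hj, isRich_of_lt hj, ← thickAt_union]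
    refine (hE ⟨j, hj⟩ x hne).mono fun y hy => ?_
    rcases hE.isRich_or_isRich_compl Z (j + 1) y ⟨y, hy.1, AgreeBelow.refl _ y⟩ with h | h
    exacts [Or.inl ⟨hy, h⟩, Or.inr ⟨hy, h⟩]
  · rw [isRich_of_le (not_lt.mp hj), isRich_of_le (not_lt.mp hj)]
    exact em (x ∈ Z)
termination_by n - j

end Rich

/-- If `Z₁ ∪ Z₂` satisfies condition (I), then `Z₁` or `Z₂` satisfies condition (I). -/
theorem stmt_3 {n : ℕ} [NeZero n] (Z₁ Z₂ : Set (Fin n → ℕ))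
    (h : CondI (Z₁ ∪ Z₂)) : CondI Z₁ ∨ CondI Z₂ := by
  obtain ⟨E, hEZ, hpos, ⟨x, hx⟩, hE⟩ := condI_iff.mp h
  have hne : (cylinder E 0 x).Nonempty := by rw [cylinder_zero]; exact ⟨x, hx⟩
  have condI_of_isRich {Z R : Set (Fin n → ℕ)} (hRZ : E ∩ R ⊆ Z)
      (hrich : IsRich E R 0 x) : CondI Z :=
    condI_iff.mpr ⟨richLeaves E R, richLeaves_subset.trans hRZ,
      fun y hy => hpos y (richLeaves_subset hy).1, hrich.richLeaves_nonempty,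
      isThickTree_richLeaves⟩
  rcases hE.isRich_or_isRich_compl Z₁ 0 x hne with hrich | hrich
  · exact Or.inl (condI_of_isRich Set.inter_subset_right hrich)
  · refine Or.inr (condI_of_isRich (fun y ⟨hyE, hy₁⟩ => ?_) hrich)
    exact (hEZ hyE).resolve_left hy₁
end
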